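/- arXiv:1810.05066 — 2 statements merged into one kernel-verified Lean document; each statement's English description precedes it below -/
import Mathlib

section
/- For all q ≥ 1, n ≥ 1, d ∈ ℕ and k ≥ 2, one has A_q^L(n,d) ≤ B_k^L(q,n,d). -/
/-- The Lee weight of an element of `ZMod q`. -/
def leeWt (q : ℕ) (a : ZMod q) : ℕ := min a.val (q - a.val)

/-- The Lee distance between two words in `(ZMod q)^n`. -/
def leeDist (q n : ℕ) (u v : Fin n → ZMod q) : ℕ := ∑ i, leeWt q (u i - v i)

/-- `𝒞_k`: the codes `C ⊆ (ℤ/qℤ)^n` with `|C| ≤ k`. -/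
abbrev CodesLe (q n k : ℕ) : Type _ := {C : Finset (Fin n → ZMod q) // C.card ≤ k}

/-- `𝒞_k(D)`: the codes `C ∈ 𝒞_k` with `C ⊇ D` and `|D| + 2|C∖D| ≤ k`. -/
abbrev SubCodes (q n k : ℕ) (D : CodesLe q n k) : Type _ :=
  {C : CodesLe q n k // D.1 ⊆ C.1 ∧ D.1.card + 2 * (C.1 \ D.1).card ≤ k}

lemma union_card_le {α : Type*} [DecidableEq α] {k : ℕ} {D C C' : Finset α}
    (hC : D ⊆ C) (hC' : D ⊆ C')
    (h : D.card + 2 * (C \ D).card ≤ k) (h' : D.card + 2 * (C' \ D).card ≤ k) :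
    (C ∪ C').card ≤ k := by
  have h1 : C ∪ C' ⊆ D ∪ (C \ D) ∪ (C' \ D) := by
    intro a ha
    simp only [Finset.mem_union, Finset.mem_sdiff] at *
    rcases ha with ha | ha
    · by_cases hD : a ∈ D
      · exact Or.inl (Or.inl hD)
      · exact Or.inl (Or.inr ⟨ha, hD⟩)
    · by_cases hD : a ∈ D
      · exact Or.inl (Or.inl hD)
      · exact Or.inr ⟨ha, hD⟩
  have h2 := Finset.card_le_card h1
  have h3 := Finset.card_union_le (D ∪ (C \ D)) (C' \ D)
  have h4 := Finset.card_union_le D (C \ D)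
  omega

/-- The matrix `M_{k,D}(x)` with entries `x(C ∪ C′)` for `C, C′ ∈ 𝒞_k(D)`. -/
def MkD (q n k : ℕ) (x : CodesLe q n k → ℝ) (D : CodesLe q n k) :
    Matrix (SubCodes q n k D) (SubCodes q n k D) ℝ :=
  fun C C' => x ⟨C.1.1 ∪ C'.1.1, union_card_le C.2.1 C'.2.1 C.2.2 C'.2.2⟩

/-- Feasibility for the level-`k` semidefinite program bounding `A_q^L(n,d)`:
`x(∅) = 1`, `x(S) = 0` whenever `S` has minimum Lee distance `< d`, and every
matrix `M_{k,D}(x)` is positive semidefinite. -/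
def FeasibleL (q n d k : ℕ) [NeZero q] (x : CodesLe q n k → ℝ) : Prop :=
  x ⟨∅, by simp⟩ = 1 ∧
  (∀ S : CodesLe q n k,
    (∃ u ∈ S.1, ∃ v ∈ S.1, u ≠ v ∧ leeDist q n u v < d) → x S = 0) ∧
  ∀ D : CodesLe q n k, (MkD q n k x D).PosSemidef

/-- The objective value `Σ_{v ∈ ℤ_q^n} x({v})`. -/
def objectiveL (q n k : ℕ) [NeZero q] (hk : 1 ≤ k) (x : CodesLe q n k → ℝ) : ℝ :=
  ∑ v : Fin n → ZMod q, x ⟨{v}, by simpa using hk⟩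

/-- The semidefinite programming bound `B_k^L(q,n,d)`. -/
noncomputable def BL (q n d k : ℕ) [NeZero q] (hk : 1 ≤ k) : ℝ :=
  sSup {y | ∃ x : CodesLe q n k → ℝ, FeasibleL q n d k x ∧ y = objectiveL q n k hk x}

/-- `A_q^L(n,d)`: the maximum cardinality of a code in `(ℤ/qℤ)^n` with minimum
Lee distance at least `d`. -/
noncomputable def ALee (q n d : ℕ) : ℕ :=
  sSup {m | ∃ C : Finset (Fin n → ZMod q), C.card = m ∧
    ∀ u ∈ C, ∀ v ∈ C, u ≠ v → d ≤ leeDist q n u v}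

/-!
The indicator `x(S) = [S ⊆ C]` of the subcodes of an optimal code `C` is feasible: it vanishes on
sets with a close pair, and every moment matrix `M_{k,D}(x)` is the rank-one matrix `v vᵀ` with
`v(C') = [C' ⊆ C]`, since `C' ∪ C'' ⊆ C` iff both are. Its objective value is `|C|`.
As `B_k^L` is an `sSup`, it bounds this value only because the feasible objective values are
bounded above: for `k ≥ 2`, the principal `2 × 2` minor of `M_{k,∅}(x)` on the rows `∅, {v}` is
`x({v}) - x({v})²`, so `0 ≤ x({v}) ≤ 1`.
-/

open Matrix

open scoped ComplexOrder in
lemma Matrix.PosSemidef.apply_mul_apply_le {ι 𝕜 : Type*} [RCLike 𝕜] {M : Matrix ι ι 𝕜}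
    (hM : M.PosSemidef) (i j : ι) : M i j * M j i ≤ M i i * M j j := by
  have hdet := (hM.submatrix ![i, j]).det_nonneg
  rw [det_fin_two] at hdet
  simpa [sub_nonneg] using hdet

section

variable {q n d k : ℕ}

def subcodeIndicator (C : Finset (Fin n → ZMod q)) (S : CodesLe q n k) : ℝ :=
  if S.1 ⊆ C then 1 else 0

lemma MkD_subcodeIndicator (C : Finset (Fin n → ZMod q)) (D : CodesLe q n k) :
    MkD q n k (subcodeIndicator C) D =
      vecMulVec (fun C' : SubCodes q n k D => subcodeIndicator C C'.1)
        (fun C' : SubCodes q n k D => subcodeIndicator C C'.1) := by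
  ext C' C''
  by_cases h' : C'.1.1 ⊆ C <;> by_cases h'' : C''.1.1 ⊆ C <;>
    simp [MkD, subcodeIndicator, vecMulVec_apply, Finset.union_subset_iff, h', h'']

lemma feasibleL_subcodeIndicator [NeZero q] {C : Finset (Fin n → ZMod q)}
    (hC : ∀ u ∈ C, ∀ v ∈ C, u ≠ v → d ≤ leeDist q n u v) :
    FeasibleL q n d k (subcodeIndicator C) := by
  refine ⟨by simp [subcodeIndicator], ?_, fun D => ?_⟩
  · rintro S ⟨u, hu, v, hv, huv, hlt⟩
    have hS : ¬S.1 ⊆ C := fun hsub => (hC u (hsub hu) v (hsub hv) huv).not_gt hlt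
    simp [subcodeIndicator, hS]
  · rw [MkD_subcodeIndicator]
    simpa using
      posSemidef_vecMulVec_self_star (fun C' : SubCodes q n k D => subcodeIndicator C C'.1)

lemma objectiveL_subcodeIndicator [NeZero q] (hk : 1 ≤ k) (C : Finset (Fin n → ZMod q)) :
    objectiveL q n k hk (subcodeIndicator C) = C.card := by
  simp [objectiveL, subcodeIndicator, Finset.sum_ite_mem]

lemma FeasibleL.singleton_le_one [NeZero q] {x : CodesLe q n k → ℝ} (hx : FeasibleL q n d k x)
    (hk : 2 ≤ k) (v : Fin n → ZMod q) :
    x ⟨{v}, (Finset.card_singleton v).trans_le (Nat.one_le_of_lt hk)⟩ ≤ 1 := by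
  let D : CodesLe q n k := ⟨∅, by simp⟩
  let Cempty : SubCodes q n k D := ⟨⟨∅, by simp⟩, by simp [D]⟩
  let Cv : SubCodes q n k D :=
    ⟨⟨{v}, (Finset.card_singleton v).trans_le (Nat.one_le_of_lt hk)⟩, by simpa [D] using hk⟩
  have hminor := (hx.2.2 D).apply_mul_apply_le Cempty Cv
  have hdiag := (hx.2.2 D).diag_nonneg (i := Cv)
  simp only [MkD, Cempty, Cv, Finset.empty_union, Finset.union_empty, Finset.union_idempotent]
    at hminor hdiag
  rw [hx.1, one_mul] at hminor
  nlinarith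

lemma objectiveL_le_BL [NeZero q] (hk : 2 ≤ k) {x : CodesLe q n k → ℝ} (hx : FeasibleL q n d k x) :
    objectiveL q n k (Nat.one_le_of_lt hk) x ≤ BL q n d k (Nat.one_le_of_lt hk) := by
  have hbdd : BddAbove
      {y | ∃ z, FeasibleL q n d k z ∧ y = objectiveL q n k (Nat.one_le_of_lt hk) z} := by
    refine ⟨Fintype.card (Fin n → ZMod q), ?_⟩
    rintro y ⟨z, hz, rfl⟩
    calc objectiveL q n k _ z ≤ ∑ _v : Fin n → ZMod q, (1 : ℝ) :=
          Finset.sum_le_sum fun v _ => hz.singleton_le_one hk v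
      _ = Fintype.card (Fin n → ZMod q) := by simp
  exact le_csSup hbdd ⟨x, hx, rfl⟩

lemma exists_card_eq_ALee (q n d : ℕ) [NeZero q] :
    ∃ C : Finset (Fin n → ZMod q), C.card = ALee q n d ∧
      ∀ u ∈ C, ∀ v ∈ C, u ≠ v → d ≤ leeDist q n u v := by
  refine Nat.sSup_mem (s := {m | ∃ C : Finset (Fin n → ZMod q), C.card = m ∧
    ∀ u ∈ C, ∀ v ∈ C, u ≠ v → d ≤ leeDist q n u v}) ?_ ?_
  · exact ⟨0, ∅, by simp, by simp⟩
  · exact ⟨Fintype.card (Fin n → ZMod q), fun _ ⟨C, hC, _⟩ => hC ▸ C.card_le_univ⟩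

end

/-- For all `q ≥ 1`, `n ≥ 1`, `d ∈ ℕ` and `k ≥ 2`,
`A_q^L(n,d) ≤ B_k^L(q,n,d)`. -/
theorem stmt3 (q n d k : ℕ) [NeZero q] (hk : 2 ≤ k) :
    (ALee q n d : ℝ) ≤ BL q n d k (by omega) := by
  obtain ⟨C, hcard, hC⟩ := exists_card_eq_ALee q n d
  calc (ALee q n d : ℝ) = objectiveL q n k (Nat.one_le_of_lt hk) (subcodeIndicator C) := by
        rw [objectiveL_subcodeIndicator, hcard]
    _ ≤ _ := objectiveL_le_BL hk (feasibleL_subcodeIndicator hC)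
end

section
/- Let q ≥ 1 be odd and define Π ⊆ (ℤ/qℤ)³ as the set of triples (0, 0, j) for integer 0 ≤ j ≤ (q−1)/2 together with the triples (0, j, h) for integer 1 ≤ j ≤ (q−1)/2 and h ∈ ℤ/qℤ (integers embedded in ℤ/qℤ). Then every triple in (ℤ/qℤ)³ lies in the same orbit of the diagonal action of the dihedral group D_q = {x ↦ εx + s : ε ∈ {1,−1}, s ∈ ℤ/qℤ} as exactly one element of Π; that is, Π is a transversal of the D_q-orbits of (ℤ/qℤ)³. -/
/-!
Translating by `-t.1` moves every triple `t` to one of the form `(0, u, v)`, and the only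
dihedral maps between such triples are `±id`. A triple `(0, u, v)` lies in `Π` exactly when its
first nonzero entry among `u, v` (or `0`) has a representative in `[0, (q-1)/2]`. For odd `q`,
of the two residues `±x` exactly one has such a representative unless `x = 0`; this gives both
existence and uniqueness, since negating `(u, v)` negates the first nonzero entry.
-/

/-- The diagonal action of the dihedral group `{x ↦ εx + s : ε ∈ {1,−1}, s ∈ ℤ/qℤ}`
on ordered triples: `p` and `p'` are related iff some dihedral map sends `p` to `p'`. -/
def dihedralRel3 (q : ℕ) (p p' : ZMod q × ZMod q × ZMod q) : Prop :=
  ∃ ε s : ZMod q, (ε = 1 ∨ ε = -1) ∧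
    p'.1 = ε * p.1 + s ∧ p'.2.1 = ε * p.2.1 + s ∧ p'.2.2 = ε * p.2.2 + s

/-- The set `Π` of triples `(0,0,j)` for `0 ≤ j ≤ (q−1)/2` and `(0,j,h)` for
`1 ≤ j ≤ (q−1)/2`, `h ∈ ℤ/qℤ`. -/
def PiSet (q : ℕ) : Set (ZMod q × ZMod q × ZMod q) :=
  {p | ∃ j : ℕ, j ≤ (q - 1) / 2 ∧ p = (0, 0, (j : ZMod q))} ∪
  {p | ∃ (j : ℕ) (h : ZMod q), 1 ≤ j ∧ j ≤ (q - 1) / 2 ∧ p = (0, (j : ZMod q), h)}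

def firstNonzero {R : Type*} [Zero R] [DecidableEq R] (b c : R) : R :=
  if b = 0 then c else b

section firstNonzero

variable {R : Type*} [AddGroup R] [DecidableEq R]

lemma firstNonzero_neg_neg (b c : R) : firstNonzero (-b) (-c) = -firstNonzero b c := by
  simp only [firstNonzero, neg_eq_zero]
  split_ifs <;> rfl

lemma firstNonzero_eq_zero {b c : R} : firstNonzero b c = 0 ↔ b = 0 ∧ c = 0 := by
  unfold firstNonzero
  split_ifs with hb <;> simp [hb]

end firstNonzero

namespace ZMod

variable {q : ℕ}

lemma val_le_half_or_neg_val_le_half (hodd : Odd q) (x : ZMod q) :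
    x.val ≤ (q - 1) / 2 ∨ (-x).val ≤ (q - 1) / 2 := by
  have : NeZero q := ⟨hodd.pos.ne'⟩
  obtain ⟨k, rfl⟩ := hodd
  have := x.val_lt
  rw [neg_val]
  split_ifs <;> omega

lemma eq_zero_of_val_le_half_of_neg_val_le_half (hodd : Odd q) {x : ZMod q}
    (hx : x.val ≤ (q - 1) / 2) (hnx : (-x).val ≤ (q - 1) / 2) : x = 0 := by
  have : NeZero q := ⟨hodd.pos.ne'⟩
  obtain ⟨k, rfl⟩ := hodd
  have := x.val_lt
  rw [neg_val] at hnx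
  split_ifs at hnx with h
  · exact h
  · omega

end ZMod

section

variable {q : ℕ}

lemma dihedralRel3.symm {p p' : ZMod q × ZMod q × ZMod q} (h : dihedralRel3 q p p') :
    dihedralRel3 q p' p := by
  obtain ⟨ε, s, hε, h1, h2, h3⟩ := h
  refine ⟨ε, -ε * s, hε, ?_, ?_, ?_⟩ <;>
    rcases hε with rfl | rfl <;> simp only [h1, h2, h3] <;> ring

lemma dihedralRel3.trans {p p' p'' : ZMod q × ZMod q × ZMod q}
    (h : dihedralRel3 q p p') (h' : dihedralRel3 q p' p'') : dihedralRel3 q p p'' := by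
  obtain ⟨ε, s, hε, h1, h2, h3⟩ := h
  obtain ⟨ε', s', hε', h1', h2', h3'⟩ := h'
  refine ⟨ε' * ε, ε' * s + s', ?_, ?_, ?_, ?_⟩
  · rcases hε with rfl | rfl <;> rcases hε' with rfl | rfl <;> simp
  all_goals simp only [h1', h2', h3', h1, h2, h3]; ring

lemma dihedralRel3_sub_fst (t : ZMod q × ZMod q × ZMod q) :
    dihedralRel3 q t (0, t.2.1 - t.1, t.2.2 - t.1) :=
  ⟨1, -t.1, Or.inl rfl, by ring, by ring, by ring⟩

lemma dihedralRel3_zero_iff {b c b' c' : ZMod q} :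
    dihedralRel3 q (0, b, c) (0, b', c') ↔ (b' = b ∧ c' = c) ∨ (b' = -b ∧ c' = -c) := by
  constructor
  · rintro ⟨ε, s, hε, h1, h2, h3⟩
    obtain rfl : s = 0 := by simpa using h1.symm
    rcases hε with rfl | rfl
    · exact Or.inl ⟨by simpa using h2, by simpa using h3⟩
    · exact Or.inr ⟨by simpa using h2, by simpa using h3⟩
  · rintro (⟨rfl, rfl⟩ | ⟨rfl, rfl⟩)
    · exact ⟨1, 0, Or.inl rfl, by simp, by simp, by simp⟩
    · exact ⟨-1, 0, Or.inr rfl, by simp, by simp, by simp⟩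

lemma mem_PiSet_iff [NeZero q] {p : ZMod q × ZMod q × ZMod q} :
    p ∈ PiSet q ↔ p.1 = 0 ∧ (firstNonzero p.2.1 p.2.2).val ≤ (q - 1) / 2 := by
  have val_cast {j : ℕ} (hj : j ≤ (q - 1) / 2) : (j : ZMod q).val = j :=
    ZMod.val_natCast_of_lt (by have := NeZero.pos q; omega)
  constructor
  · rintro (⟨j, hj, rfl⟩ | ⟨j, h, hj1, hj, rfl⟩)
    · simpa [firstNonzero, val_cast hj] using hj
    · have hj0 : (j : ZMod q) ≠ 0 := by
        rw [← ZMod.val_ne_zero, val_cast hj]; omega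
      simpa [firstNonzero, hj0, val_cast hj] using hj
  · obtain ⟨a, b, c⟩ := p
    rintro ⟨rfl, hval⟩
    by_cases hb : b = 0
    · subst hb
      exact Or.inl ⟨c.val, by simpa [firstNonzero] using hval, by simp⟩
    · refine Or.inr ⟨b.val, c, ?_, by simpa [firstNonzero, hb] using hval, by simp⟩
      exact Nat.one_le_iff_ne_zero.mpr ((ZMod.val_ne_zero b).mpr hb)

lemma exists_mem_PiSet_dihedralRel3 (hodd : Odd q) (t : ZMod q × ZMod q × ZMod q) :
    ∃ p ∈ PiSet q, dihedralRel3 q t p := by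
  have : NeZero q := ⟨hodd.pos.ne'⟩
  set u := t.2.1 - t.1
  set v := t.2.2 - t.1
  have htuv : dihedralRel3 q t (0, u, v) := dihedralRel3_sub_fst t
  rcases (firstNonzero u v).val_le_half_or_neg_val_le_half hodd with h | h
  · exact ⟨(0, u, v), mem_PiSet_iff.mpr ⟨rfl, h⟩, htuv⟩
  · refine ⟨(0, -u, -v), mem_PiSet_iff.mpr ⟨rfl, ?_⟩, ?_⟩
    · rwa [firstNonzero_neg_neg]
    · exact htuv.trans (dihedralRel3_zero_iff.mpr (Or.inr ⟨rfl, rfl⟩))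

lemma eq_of_mem_PiSet_of_dihedralRel3 (hodd : Odd q) {p p' : ZMod q × ZMod q × ZMod q}
    (hp : p ∈ PiSet q) (hp' : p' ∈ PiSet q) (h : dihedralRel3 q p p') : p = p' := by
  have : NeZero q := ⟨hodd.pos.ne'⟩
  obtain ⟨a, b, c⟩ := p
  obtain ⟨a', b', c'⟩ := p'
  obtain ⟨rfl, hbc⟩ := mem_PiSet_iff.mp hp
  obtain ⟨rfl, hbc'⟩ := mem_PiSet_iff.mp hp'
  rcases dihedralRel3_zero_iff.mp h with ⟨rfl, rfl⟩ | ⟨rfl, rfl⟩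
  · rfl
  · rw [firstNonzero_neg_neg] at hbc'
    obtain ⟨rfl, rfl⟩ :=
      firstNonzero_eq_zero.mp (ZMod.eq_zero_of_val_le_half_of_neg_val_le_half hodd hbc hbc')
    simp

end

theorem stmt17_general (q : ℕ) (hodd : Odd q) (t : ZMod q × ZMod q × ZMod q) :
    ∃! p, p ∈ PiSet q ∧ dihedralRel3 q t p := by
  obtain ⟨p, hp, htp⟩ := exists_mem_PiSet_dihedralRel3 hodd t
  exact ⟨p, ⟨hp, htp⟩, fun p' ⟨hp', htp'⟩ =>
    eq_of_mem_PiSet_of_dihedralRel3 hodd hp' hp (htp'.symm.trans htp)⟩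

/-- for odd `q`, every triple in `(ℤ/qℤ)³` is in the same dihedral orbit
as exactly one element of `Π`; i.e. `Π` is a transversal of the orbits. -/
theorem stmt17 (q : ℕ) (hq : 1 ≤ q) (hodd : Odd q) (t : ZMod q × ZMod q × ZMod q) :
    ∃! p, p ∈ PiSet q ∧ dihedralRel3 q t p :=
  stmt17_general q hodd t
end
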